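/- arXiv:0810.2753 — 5 statements merged into one kernel-verified Lean document; each statement's English description precedes it below -/
import Mathlib

section
/- Let A^n denote the real vector space of real symmetric n×n matrices and let u : ℝ → ℝ be convex. Then the functional Λ^n_u : A^n → ℝ defined by Λ^n_u(A) = F_A(u) = (1/n) Σ_{i=1}^n u(λ_i(A)) is convex. -/
open scoped Matrix

/-- Spectral distribution integral `F_M(f) = (1/n) ∑_i f(λ_i(M))` of a symmetric
(Hermitian) real matrix `M`; junk value `0` for non-Hermitian matrices. -/
noncomputable def specInt {ι : Type*} [Fintype ι] [DecidableEq ι]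
    (M : Matrix ι ι ℝ) (f : ℝ → ℝ) : ℝ :=
  if h : M.IsHermitian then (∑ i, f (h.eigenvalues i)) / (Fintype.card ι) else 0

open scoped InnerProductSpace

/-- The quadratic form of a matrix. -/
noncomputable def qform {n : ℕ} (A : Matrix (Fin n) (Fin n) ℝ)
    (v : EuclideanSpace ℝ (Fin n)) : ℝ :=
  ⟪v, Matrix.toEuclideanLin A v⟫_ℝ

lemma toEuclideanLin_eigenvectorBasis {n : ℕ} {A : Matrix (Fin n) (Fin n) ℝ}
    (hA : A.IsHermitian) (j : Fin n) :
    Matrix.toEuclideanLin A (hA.eigenvectorBasis j)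
      = hA.eigenvalues j • hA.eigenvectorBasis j := by
  ext i
  have := congrFun (hA.mulVec_eigenvectorBasis j) i
  simpa [Matrix.toEuclideanLin_apply] using this

lemma qform_eq_sum {n : ℕ} {A : Matrix (Fin n) (Fin n) ℝ} (hA : A.IsHermitian)
    (x : EuclideanSpace ℝ (Fin n)) :
    qform A x = ∑ j, (⟪x, hA.eigenvectorBasis j⟫_ℝ)^2 • hA.eigenvalues j := by
  have hsym : (Matrix.toEuclideanLin A).IsSymmetric :=
    Matrix.isHermitian_iff_isSymmetric.mp hA
  have := (hA.eigenvectorBasis.sum_inner_mul_inner x (Matrix.toEuclideanLin A x)).symm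
  rw [qform, this]
  refine Finset.sum_congr rfl fun j _ => ?_
  have h1 : ⟪(hA.eigenvectorBasis j : EuclideanSpace ℝ (Fin n)),
      Matrix.toEuclideanLin A x⟫_ℝ
      = hA.eigenvalues j * ⟪x, hA.eigenvectorBasis j⟫_ℝ := by
    rw [← hsym (hA.eigenvectorBasis j) x, toEuclideanLin_eigenvectorBasis hA j,
      inner_smul_left, real_inner_comm]
    simp
  rw [h1, smul_eq_mul]; ring

lemma qform_parseval_weights {n : ℕ} {A : Matrix (Fin n) (Fin n) ℝ}
    (hA : A.IsHermitian) (e : OrthonormalBasis (Fin n) ℝ (EuclideanSpace ℝ (Fin n))) :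
    ∀ j, ∑ k, (⟪e k, hA.eigenvectorBasis j⟫_ℝ)^2 = 1 := by
  intro j
  have := e.sum_inner_mul_inner (hA.eigenvectorBasis j) (hA.eigenvectorBasis j)
  have hnorm : ⟪(hA.eigenvectorBasis j : EuclideanSpace ℝ (Fin n)),
      hA.eigenvectorBasis j⟫_ℝ = 1 := by
    rw [real_inner_self_eq_norm_sq, hA.eigenvectorBasis.orthonormal.1 j]; norm_num
  rw [hnorm] at this
  rw [← this]
  refine Finset.sum_congr rfl fun k _ => ?_
  rw [real_inner_comm (hA.eigenvectorBasis j) (e k), real_inner_comm (e k)]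
  ring

/-- Peierls inequality. -/
lemma peierls {n : ℕ} (u : ℝ → ℝ) (hu : ConvexOn ℝ Set.univ u)
    {A : Matrix (Fin n) (Fin n) ℝ} (hA : A.IsHermitian)
    (e : OrthonormalBasis (Fin n) ℝ (EuclideanSpace ℝ (Fin n))) :
    ∑ k, u (qform A (e k)) ≤ ∑ j, u (hA.eigenvalues j) := by
  have hstep : ∀ k, u (qform A (e k))
      ≤ ∑ j, (⟪e k, hA.eigenvectorBasis j⟫_ℝ)^2 * u (hA.eigenvalues j) := by
    intro k
    have hw0 : ∀ j ∈ Finset.univ, (0:ℝ) ≤ (⟪e k, hA.eigenvectorBasis j⟫_ℝ)^2 :=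
      fun j _ => sq_nonneg _
    have hw1 : ∑ j, (⟪e k, hA.eigenvectorBasis j⟫_ℝ)^2 = 1 := by
      have := hA.eigenvectorBasis.sum_inner_mul_inner (e k) (e k)
      have hnorm : ⟪e k, e k⟫_ℝ = 1 := by
        rw [real_inner_self_eq_norm_sq, e.orthonormal.1 k]; norm_num
      rw [hnorm] at this
      rw [← this]
      exact Finset.sum_congr rfl fun j _ => by
        rw [real_inner_comm (hA.eigenvectorBasis j) (e k)]; ring
    have := hu.map_sum_le (p := fun j => hA.eigenvalues j) hw0 hw1 (fun j _ => Set.mem_univ _)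
    rw [qform_eq_sum hA (e k)]
    simpa [smul_eq_mul] using this
  calc ∑ k, u (qform A (e k))
      ≤ ∑ k, ∑ j, (⟪e k, hA.eigenvectorBasis j⟫_ℝ)^2 * u (hA.eigenvalues j) :=
        Finset.sum_le_sum fun k _ => hstep k
    _ = ∑ j, (∑ k, (⟪e k, hA.eigenvectorBasis j⟫_ℝ)^2) * u (hA.eigenvalues j) := by
        rw [Finset.sum_comm]
        exact Finset.sum_congr rfl fun j _ => (Finset.sum_mul _ _ _).symm
    _ = ∑ j, u (hA.eigenvalues j) := by
        refine Finset.sum_congr rfl fun j _ => ?_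
        rw [qform_parseval_weights hA e j, one_mul]

/-- Lemma A.2(i) (Guionnet–Zeitouni): if `u : ℝ → ℝ` is convex, then the functional
`A ↦ F_A(u) = (1/n) ∑_i u(λ_i(A))` is convex on the set of real symmetric
(Hermitian) `n × n` matrices. -/
theorem specInt_convexOn (n : ℕ) (u : ℝ → ℝ) (hu : ConvexOn ℝ Set.univ u) :
    ConvexOn ℝ {A : Matrix (Fin n) (Fin n) ℝ | A.IsHermitian}
      (fun A => specInt A u) := by
  have hsmul : ∀ (c : ℝ) {M : Matrix (Fin n) (Fin n) ℝ}, M.IsHermitian →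
      (c • M).IsHermitian := by
    intro c M hM
    unfold Matrix.IsHermitian at *
    rw [Matrix.conjTranspose_smul, hM, star_trivial]
  constructor
  · intro A hA B hB a b ha hb hab
    simp only [Set.mem_setOf_eq] at *
    exact Matrix.IsHermitian.add (hsmul a hA) (hsmul b hB)
  · intro A hA B hB a b ha hb hab
    simp only [Set.mem_setOf_eq] at hA hB
    have hM : (a • A + b • B).IsHermitian :=
      Matrix.IsHermitian.add (hsmul a hA) (hsmul b hB)
    set e := hM.eigenvectorBasis with he
    have key : ∀ k, hM.eigenvalues k = qform (a • A + b • B) (e k) := by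
      intro k
      rw [qform, toEuclideanLin_eigenvectorBasis hM k, inner_smul_right]
      have : ⟪e k, e k⟫_ℝ = 1 := by
        rw [real_inner_self_eq_norm_sq, e.orthonormal.1 k]; norm_num
      rw [this, mul_one]
    have qsplit : ∀ v, qform (a • A + b • B) v = a * qform A v + b * qform B v := by
      intro v
      simp only [qform, map_add, map_smul, LinearMap.add_apply, LinearMap.smul_apply,
        inner_add_right, inner_smul_right]
    have main : ∑ k, u (hM.eigenvalues k)
        ≤ a * ∑ j, u (hA.eigenvalues j) + b * ∑ j, u (hB.eigenvalues j) := by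
      calc ∑ k, u (hM.eigenvalues k)
          ≤ ∑ k, (a * u (qform A (e k)) + b * u (qform B (e k))) := by
            refine Finset.sum_le_sum fun k _ => ?_
            rw [key k, qsplit]
            have := hu.2 (Set.mem_univ (qform A (e k))) (Set.mem_univ (qform B (e k)))
              ha hb hab
            simpa [smul_eq_mul] using this
        _ = a * ∑ k, u (qform A (e k)) + b * ∑ k, u (qform B (e k)) := by
            rw [Finset.sum_add_distrib, Finset.mul_sum, Finset.mul_sum]
        _ ≤ a * ∑ j, u (hA.eigenvalues j) + b * ∑ j, u (hB.eigenvalues j) := by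
            exact add_le_add (mul_le_mul_of_nonneg_left (peierls u hu hA e) ha)
              (mul_le_mul_of_nonneg_left (peierls u hu hB e) hb)
    simp only [specInt, dif_pos hM, dif_pos hA, dif_pos hB, smul_eq_mul]
    rw [div_eq_mul_inv, div_eq_mul_inv, div_eq_mul_inv, ← mul_assoc, ← mul_assoc,
      ← add_mul]
    exact mul_le_mul_of_nonneg_right main (by positivity)
end

section
/- Let A^n denote the set of real symmetric n×n matrices, identified with ℝ^{n(n+1)/2} by collecting the entries on and above the diagonal and equipped with the Euclidean norm. If u : ℝ → ℝ is Lipschitz with Lipschitz constant ‖u‖_L, then the functional Λ^n_u : A^n → ℝ defined by Λ^n_u(A) = F_A(u) = (1/n) Σ_{i=1}^n u(λ_i(A)) is Lipschitz, with Lipschitz constant at most (√2/√n)·‖u‖_L. -/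
open scoped Matrix NNReal

open scoped Classical in
/-- The Euclidean norm of a symmetric `n × n` matrix under the identification with
`ℝ^{n(n+1)/2}` obtained by collecting the entries on and above the diagonal. -/
noncomputable def symEuclNorm {n : ℕ} (A : Matrix (Fin n) (Fin n) ℝ) : ℝ :=
  Real.sqrt (∑ q ∈ Finset.univ.filter (fun q : Fin n × Fin n => q.1 ≤ q.2), (A q.1 q.2) ^ 2)

open Matrix Finset

lemma trace_conj_mul_conj {n : ℕ} (P Q : Matrix (Fin n) (Fin n) ℝ) (f g : Fin n → ℝ) :
    Matrix.trace ((P * Matrix.diagonal f * star P) * (Q * Matrix.diagonal g * star Q))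
      = ∑ i, ∑ j, f i * g j * ((star P * Q) i j) ^ 2 := by
  have h1 : P * Matrix.diagonal f * star P * (Q * Matrix.diagonal g * star Q)
      = P * (Matrix.diagonal f * (star P * Q) * Matrix.diagonal g * star Q) := by
    simp only [Matrix.mul_assoc]
  rw [h1, Matrix.trace_mul_comm]
  have h2 : Matrix.diagonal f * (star P * Q) * Matrix.diagonal g * star Q * P
      = Matrix.diagonal f * (star P * Q) * Matrix.diagonal g * star (star P * Q) := by
    rw [StarMul.star_mul, star_star, Matrix.mul_assoc]
  rw [h2, Matrix.trace]
  simp only [Matrix.diag_apply, Matrix.mul_apply, Matrix.diagonal_apply, Matrix.star_apply,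
    star_trivial, ite_mul, mul_ite, zero_mul, mul_zero, Finset.sum_ite_eq, Finset.sum_ite_eq',
    Finset.mem_univ, if_true]
  exact Finset.sum_congr rfl fun i _ => Finset.sum_congr rfl fun j _ => by ring

lemma exists_perm_sum_sq_eigenvalues_le {n : ℕ} (A B : Matrix (Fin n) (Fin n) ℝ)
    (hA : A.IsHermitian) (hB : B.IsHermitian) :
    ∃ σ : Equiv.Perm (Fin n),
      ∑ i, (hA.eigenvalues i - hB.eigenvalues (σ i)) ^ 2
        ≤ ∑ i, ∑ j, (A i j - B i j) ^ 2 := by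
  set U : Matrix (Fin n) (Fin n) ℝ := (hA.eigenvectorUnitary : Matrix (Fin n) (Fin n) ℝ) with hUdef
  set V : Matrix (Fin n) (Fin n) ℝ := (hB.eigenvectorUnitary : Matrix (Fin n) (Fin n) ℝ) with hVdef
  set d := hA.eigenvalues with hd
  set e := hB.eigenvalues with he
  have hU : U * star U = 1 := mem_unitaryGroup_iff.mp (hA.eigenvectorUnitary).2
  have hU' : star U * U = 1 := mem_unitaryGroup_iff'.mp (hA.eigenvectorUnitary).2
  have hV : V * star V = 1 := mem_unitaryGroup_iff.mp (hB.eigenvectorUnitary).2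
  have hV' : star V * V = 1 := mem_unitaryGroup_iff'.mp (hB.eigenvectorUnitary).2
  set W : Matrix (Fin n) (Fin n) ℝ := star U * V with hWdef
  have hW : W * star W = 1 := by
    calc W * star W = star U * (V * star V) * U := by
          rw [hWdef, StarMul.star_mul, star_star, Matrix.mul_assoc, ← Matrix.mul_assoc V,
            ← Matrix.mul_assoc]
      _ = 1 := by rw [hV, Matrix.mul_one, hU']
  have hW' : star W * W = 1 := by
    calc star W * W = star V * (U * star U) * V := by
          rw [hWdef, StarMul.star_mul, star_star, Matrix.mul_assoc, ← Matrix.mul_assoc U,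
            ← Matrix.mul_assoc]
      _ = 1 := by rw [hU, Matrix.mul_one, hV']
  have hAs : A = U * Matrix.diagonal d * star U := by
    have := hA.spectral_theorem
    rwa [RCLike.ofReal_real_eq_id, Function.id_comp] at this
  have hBs : B = V * Matrix.diagonal e * star V := by
    have := hB.spectral_theorem
    rwa [RCLike.ofReal_real_eq_id, Function.id_comp] at this
  -- traces of products
  have htrAA : Matrix.trace (A * A) = ∑ i, d i ^ 2 := by
    conv_lhs => rw [hAs]
    rw [trace_conj_mul_conj, hU']
    simp [Matrix.one_apply, apply_ite, Finset.sum_ite_eq', sq]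
  have htrBB : Matrix.trace (B * B) = ∑ i, e i ^ 2 := by
    conv_lhs => rw [hBs]
    rw [trace_conj_mul_conj, hV']
    simp [Matrix.one_apply, apply_ite, Finset.sum_ite_eq', sq]
  have htrAB : Matrix.trace (A * B) = ∑ i, ∑ j, d i * e j * (W i j) ^ 2 := by
    conv_lhs => rw [hAs, hBs]
    rw [trace_conj_mul_conj]
  -- Frobenius norm squared equals the trace expression
  have hC : (A - B).IsHermitian := hA.sub hB
  have hfrob : ∑ i, ∑ j, (A i j - B i j) ^ 2
      = Matrix.trace (A * A) - 2 * Matrix.trace (A * B) + Matrix.trace (B * B) := by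
    have hsym : ∀ i j, (A - B) j i = (A - B) i j := fun i j => by
      conv_lhs => rw [← hC]
      simp [Matrix.conjTranspose_apply]
    have h1 : Matrix.trace ((A - B) * (A - B)) = ∑ i, ∑ j, (A i j - B i j) ^ 2 := by
      rw [Matrix.trace]
      simp only [Matrix.diag_apply, Matrix.mul_apply]
      refine Finset.sum_congr rfl fun i _ => Finset.sum_congr rfl fun j _ => ?_
      rw [hsym i j]
      simp [sq, Matrix.sub_apply]
    have h2 : (A - B) * (A - B) = A * A - A * B - B * A + B * B := by
      rw [sub_mul, mul_sub, mul_sub]; abel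
    rw [← h1, h2]
    rw [Matrix.trace_add, Matrix.trace_sub, Matrix.trace_sub, Matrix.trace_mul_comm B A]
    ring
  -- the doubly stochastic matrix of squared entries of W
  have hrow : ∀ i, ∑ j, (W i j) ^ 2 = 1 := by
    intro i
    have := congrFun (congrFun hW i) i
    rw [Matrix.mul_apply] at this
    simpa [Matrix.star_apply, Matrix.one_apply, sq] using this
  have hcol : ∀ j, ∑ i, (W i j) ^ 2 = 1 := by
    intro j
    have := congrFun (congrFun hW' j) j
    rw [Matrix.mul_apply] at this
    simpa [Matrix.star_apply, Matrix.one_apply, sq] using this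
  have hS : (Matrix.of fun i j => (W i j) ^ 2) ∈ doublyStochastic ℝ (Fin n) := by
    rw [mem_doublyStochastic_iff_sum]
    exact ⟨fun i j => sq_nonneg _, hrow, hcol⟩
  obtain ⟨w, hw0, hw1, hwS⟩ := exists_eq_sum_perm_of_mem_doublyStochastic hS
  have hSij : ∀ i j, (W i j) ^ 2 = ∑ σ : Equiv.Perm (Fin n), if σ i = j then w σ else 0 := by
    intro i j
    have := congrFun (congrFun hwS i) j
    simpa [Matrix.sum_apply, Matrix.smul_apply, smul_eq_mul, Equiv.Perm.permMatrix,
      PEquiv.toMatrix_apply, Equiv.toPEquiv_apply, mul_ite, mul_one, mul_zero] using this.symm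
  -- express trace (A*B) as convex combination over permutations
  have hconv : Matrix.trace (A * B) = ∑ σ : Equiv.Perm (Fin n), w σ * ∑ i, d i * e (σ i) := by
    rw [htrAB]
    calc ∑ i, ∑ j, d i * e j * (W i j) ^ 2
        = ∑ i, ∑ σ : Equiv.Perm (Fin n), ∑ j,
            (if σ i = j then w σ * (d i * e j) else 0) := by
          refine Finset.sum_congr rfl fun i _ => ?_
          rw [← Finset.sum_comm]
          refine Finset.sum_congr rfl fun j _ => ?_
          rw [hSij, Finset.mul_sum]
          exact Finset.sum_congr rfl fun σ _ => by split <;> ring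
      _ = ∑ σ : Equiv.Perm (Fin n), w σ * ∑ i, d i * e (σ i) := by
          rw [Finset.sum_comm]
          refine Finset.sum_congr rfl fun σ _ => ?_
          rw [Finset.mul_sum]
          refine Finset.sum_congr rfl fun i _ => ?_
          simp [Finset.sum_ite_eq]
  -- extract a permutation at least as good as the convex combination
  have hσ : ∃ σ : Equiv.Perm (Fin n), Matrix.trace (A * B) ≤ ∑ i, d i * e (σ i) := by
    by_contra h
    push_neg at h
    obtain ⟨σ₀, hσ₀⟩ : ∃ σ : Equiv.Perm (Fin n), 0 < w σ := by
      by_contra h'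
      push_neg at h'
      have : ∑ σ : Equiv.Perm (Fin n), w σ = 0 :=
        Finset.sum_eq_zero fun σ _ => le_antisymm (h' σ) (hw0 σ)
      rw [hw1] at this; norm_num at this
    have hlt : ∑ σ : Equiv.Perm (Fin n), w σ * ∑ i, d i * e (σ i)
        < ∑ σ : Equiv.Perm (Fin n), w σ * Matrix.trace (A * B) := by
      refine Finset.sum_lt_sum (fun σ _ => mul_le_mul_of_nonneg_left (h σ).le (hw0 σ))
        ⟨σ₀, Finset.mem_univ σ₀, by exact mul_lt_mul_of_pos_left (h σ₀) hσ₀⟩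
    rw [← Finset.sum_mul, hw1, one_mul, ← hconv] at hlt
    exact lt_irrefl _ hlt
  obtain ⟨σ, hσle⟩ := hσ
  refine ⟨σ, ?_⟩
  have hesum : ∑ i, e (σ i) ^ 2 = ∑ i, e i ^ 2 := Equiv.sum_comp σ fun i => e i ^ 2
  have expand : ∑ i, (d i - e (σ i)) ^ 2
      = ∑ i, d i ^ 2 + ∑ i, e i ^ 2 - 2 * ∑ i, d i * e (σ i) := by
    rw [← hesum]
    rw [← Finset.sum_add_distrib, Finset.mul_sum, ← Finset.sum_sub_distrib]
    exact Finset.sum_congr rfl fun i _ => by ring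
  rw [expand, hfrob, htrAA, htrBB]
  linarith

open Matrix Finset in
lemma sum_sq_le_two_mul_symEuclNorm_sq {n : ℕ} (C : Matrix (Fin n) (Fin n) ℝ)
    (hC : C.IsHermitian) :
    ∑ i, ∑ j, C i j ^ 2 ≤ 2 * symEuclNorm C ^ 2 := by
  classical
  have hsym : ∀ i j, C j i = C i j := fun i j => by
    conv_lhs => rw [← hC]
    simp [Matrix.conjTranspose_apply]
  have hnn : (0:ℝ) ≤ ∑ q ∈ Finset.univ.filter (fun q : Fin n × Fin n => q.1 ≤ q.2),
      (C q.1 q.2) ^ 2 := Finset.sum_nonneg fun q _ => sq_nonneg _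
  rw [symEuclNorm, Real.sq_sqrt hnn]
  have hprod : ∑ i, ∑ j, C i j ^ 2 = ∑ q : Fin n × Fin n, C q.1 q.2 ^ 2 := by
    rw [← Finset.univ_product_univ, Finset.sum_product]
  rw [hprod, ← Finset.sum_filter_add_sum_filter_not Finset.univ
    (fun q : Fin n × Fin n => q.1 ≤ q.2) (fun q => C q.1 q.2 ^ 2)]
  have hswap : ∑ q ∈ Finset.univ.filter (fun q : Fin n × Fin n => ¬ q.1 ≤ q.2), C q.1 q.2 ^ 2
      = ∑ q ∈ Finset.univ.filter (fun q : Fin n × Fin n => q.1 < q.2), C q.1 q.2 ^ 2 := by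
    refine Finset.sum_equiv (Equiv.prodComm (Fin n) (Fin n)) (fun q => ?_) (fun q hq => ?_)
    · simp only [Finset.mem_filter, Finset.mem_univ, true_and, Equiv.prodComm_apply, Prod.fst_swap,
        Prod.snd_swap]
      constructor
      · intro h; exact lt_of_not_ge h
      · intro h; exact not_le.2 h
    · simp only [Equiv.prodComm_apply, Prod.fst_swap, Prod.snd_swap]
      rw [hsym q.2 q.1]
  have hle : ∑ q ∈ Finset.univ.filter (fun q : Fin n × Fin n => q.1 < q.2), C q.1 q.2 ^ 2
      ≤ ∑ q ∈ Finset.univ.filter (fun q : Fin n × Fin n => q.1 ≤ q.2), C q.1 q.2 ^ 2 := by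
    refine Finset.sum_le_sum_of_subset_of_nonneg ?_ fun q _ _ => sq_nonneg _
    intro q hq
    simp only [Finset.mem_filter, Finset.mem_univ, true_and] at hq ⊢
    exact hq.le
  rw [hswap]
  linarith

/-- Lemma A.2(ii) (Guionnet–Zeitouni): if `u : ℝ → ℝ` is Lipschitz with constant
`L`, then the functional `A ↦ F_A(u) = (1/n) ∑_i u(λ_i(A))` on real symmetric
`n × n` matrices (with the Euclidean norm via the on-and-above-diagonal entries)
is Lipschitz with constant at most `√2/√n · L`. -/
theorem specInt_lipschitz (n : ℕ) (hn : 0 < n) (u : ℝ → ℝ) (L : ℝ≥0)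
    (hu : LipschitzWith L u) :
    ∀ A B : Matrix (Fin n) (Fin n) ℝ, A.IsHermitian → B.IsHermitian →
      |specInt A u - specInt B u|
        ≤ (Real.sqrt 2 / Real.sqrt n) * (L : ℝ) * symEuclNorm (A - B) := by
  intro A B hA hB
  obtain ⟨σ, hσ⟩ := exists_perm_sum_sq_eigenvalues_le A B hA hB
  set d := hA.eigenvalues with hd
  set e := hB.eigenvalues with he
  set N := symEuclNorm (A - B) with hN
  have hNnn : 0 ≤ N := Real.sqrt_nonneg _
  set Q := ∑ i, (d i - e (σ i)) ^ 2 with hQ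
  have hQnn : 0 ≤ Q := Finset.sum_nonneg fun i _ => sq_nonneg _
  set F := ∑ i, ∑ j, (A i j - B i j) ^ 2 with hF
  have hFnn : 0 ≤ F := Finset.sum_nonneg fun i _ => Finset.sum_nonneg fun j _ => sq_nonneg _
  set S := ∑ i, |d i - e (σ i)| with hS
  have hSnn : 0 ≤ S := Finset.sum_nonneg fun i _ => abs_nonneg _
  -- difference of spectral integrals
  have hspec : specInt A u - specInt B u = (∑ i, (u (d i) - u (e (σ i)))) / n := by
    rw [specInt, specInt, dif_pos hA, dif_pos hB, Fintype.card_fin, div_sub_div_same]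
    congr 1
    rw [Finset.sum_sub_distrib]
    congr 1
    exact (Equiv.sum_comp σ fun i => u (e i)).symm
  have h1 : |∑ i, (u (d i) - u (e (σ i)))| ≤ (L : ℝ) * S := by
    calc |∑ i, (u (d i) - u (e (σ i)))| ≤ ∑ i, |u (d i) - u (e (σ i))| :=
          Finset.abs_sum_le_sum_abs _ _
      _ ≤ ∑ i, (L : ℝ) * |d i - e (σ i)| := by
          refine Finset.sum_le_sum fun i _ => ?_
          have := hu.dist_le_mul (d i) (e (σ i))
          rwa [Real.dist_eq, Real.dist_eq] at this
      _ = (L : ℝ) * S := by rw [hS, Finset.mul_sum]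
  have h2 : S ≤ Real.sqrt n * Real.sqrt Q := by
    have hsq : S ^ 2 ≤ n * Q := by
      have := sq_sum_le_card_mul_sum_sq (s := Finset.univ) (f := fun i => |d i - e (σ i)|)
      simpa [hS, hQ, sq_abs] using this
    calc S = Real.sqrt (S ^ 2) := (Real.sqrt_sq hSnn).symm
      _ ≤ Real.sqrt (n * Q) := Real.sqrt_le_sqrt hsq
      _ = Real.sqrt n * Real.sqrt Q := Real.sqrt_mul (Nat.cast_nonneg n) Q
  have h3 : Real.sqrt Q ≤ Real.sqrt 2 * N := by
    calc Real.sqrt Q ≤ Real.sqrt F := Real.sqrt_le_sqrt hσ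
      _ ≤ Real.sqrt (2 * N ^ 2) := Real.sqrt_le_sqrt (sum_sq_le_two_mul_symEuclNorm_sq _ (hA.sub hB))
      _ = Real.sqrt 2 * N := by
          rw [Real.sqrt_mul (by norm_num), Real.sqrt_sq hNnn]
  have hnpos : (0:ℝ) < n := by exact_mod_cast hn
  have hsn : (0:ℝ) < Real.sqrt n := Real.sqrt_pos.2 hnpos
  have key : |specInt A u - specInt B u| ≤ ((L:ℝ) * (Real.sqrt n * (Real.sqrt 2 * N))) / n := by
    rw [hspec, abs_div, abs_of_pos hnpos]
    refine (div_le_div_iff_of_pos_right hnpos).mpr ?_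
    calc |∑ i, (u (d i) - u (e (σ i)))| ≤ (L : ℝ) * S := h1
      _ ≤ (L : ℝ) * (Real.sqrt n * Real.sqrt Q) := by
          exact mul_le_mul_of_nonneg_left h2 L.coe_nonneg
      _ ≤ (L : ℝ) * (Real.sqrt n * (Real.sqrt 2 * N)) := by
          exact mul_le_mul_of_nonneg_left (mul_le_mul_of_nonneg_left h3 hsn.le) L.coe_nonneg
  refine key.trans (le_of_eq ?_)
  have hnn : (n:ℝ) = Real.sqrt n * Real.sqrt n := (Real.mul_self_sqrt hnpos.le).symm
  rw [hnn]
  field_simp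
  conv_rhs => rw [hnn]
  ring
end

section
/- Let A and B be real symmetric n×n matrices. Then ‖F_A − F_B‖_∞ ≤ rank(A − B)/n, i.e., the supremum over λ ∈ ℝ of |F_A(λ) − F_B(λ)| is at most rank(A − B)/n. -/
open scoped Matrix

open scoped Classical in
/-- Empirical spectral cumulative distribution function
`F_M(λ) = (1/n) #{i : λ_i(M) ≤ λ}`; junk value `0` for non-Hermitian matrices. -/
noncomputable def esdCDF {ι : Type*} [Fintype ι] [DecidableEq ι]
    (M : Matrix ι ι ℝ) (lam : ℝ) : ℝ :=
  if h : M.IsHermitian then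
    ((Finset.univ.filter fun i => h.eigenvalues i ≤ lam).card : ℝ) / (Fintype.card ι)
  else 0

/-!
Fix `c : ℝ`. Let `S` be the span of the eigenvectors of `A` with eigenvalue `≤ c`, `P` the span of
those of `B` with eigenvalue `> c`, and `K = ker (A - B)`. On `S` we have `⟪x, A x⟫ ≤ c ‖x‖²`, on
`P \ {0}` we have `⟪x, B x⟫ > c ‖x‖²`, and `A x = B x` on `K`; hence `S ⊓ K` and `P` are disjoint.
Counting dimensions, `dim S + dim K + dim P ≤ 2n`, which reads
`#{i | λᵢ(A) ≤ c} ≤ #{i | λᵢ(B) ≤ c} + rank (A - B)`. Exchanging `A` and `B` gives the bound.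
-/

open scoped InnerProductSpace
open Module Submodule Finset

theorem Submodule.finrank_add_finrank_add_finrank_le_of_disjoint_inf {K V : Type*} [DivisionRing K]
    [AddCommGroup V] [Module K V] [FiniteDimensional K V] {S T U : Submodule K V}
    (h : Disjoint (S ⊓ T) U) :
    finrank K S + finrank K T + finrank K U ≤ 2 * finrank K V := by
  have h_disj := finrank_add_finrank_le_of_disjoint h
  have h_sup_inf := finrank_sup_add_finrank_inf_eq S T
  have h_sup := finrank_le (S ⊔ T)
  omega

theorem Module.Basis.finrank_span_image {R M ι : Type*} [DivisionRing R] [AddCommGroup M]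
    [Module R M] (b : Basis ι R M) (s : Finset ι) : finrank R (span R (b '' s)) = #s := by
  rw [Set.image_eq_range]
  exact (finrank_span_eq_card (b.linearIndependent.comp _ Subtype.val_injective)).trans (by simp)

namespace Matrix

theorem rank_add_finrank_ker_toEuclideanLin {𝕜 m n : Type*} [RCLike 𝕜] [Fintype m] [Fintype n]
    [DecidableEq n] (A : Matrix m n 𝕜) :
    A.rank + finrank 𝕜 (LinearMap.ker (toEuclideanLin A)) = Fintype.card n := by
  rw [rank_eq_finrank_range_toLin A (PiLp.basisFun 2 𝕜 m) (PiLp.basisFun 2 𝕜 n),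
    ← toLpLin_eq_toLin, LinearMap.finrank_range_add_finrank_ker, finrank_euclideanSpace]

theorem rank_neg {R m n : Type*} [CommRing R] [Fintype n] (A : Matrix m n R) :
    (-A).rank = A.rank := by
  simpa using rank_smul_of_mem_nonZeroDivisors A isUnit_neg_one.mem_nonZeroDivisors

theorem rank_sub_comm {R m n : Type*} [CommRing R] [Fintype n] (A B : Matrix m n R) :
    (A - B).rank = (B - A).rank := by
  rw [← neg_sub, rank_neg]

end Matrix

namespace Matrix.IsHermitian

variable {𝕜 ι : Type*} [RCLike 𝕜] [Fintype ι] [DecidableEq ι] {A B : Matrix ι ι 𝕜}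

noncomputable def spectralSubspace (hA : A.IsHermitian) (p : ℝ → Prop) :
    Submodule 𝕜 (EuclideanSpace 𝕜 ι) :=
  span 𝕜 (hA.eigenvectorBasis '' {i | p (hA.eigenvalues i)})

theorem finrank_spectralSubspace (hA : A.IsHermitian) (p : ℝ → Prop) [DecidablePred p] :
    finrank 𝕜 (hA.spectralSubspace p) = #{i | p (hA.eigenvalues i)} := by
  have hs : {i | p (hA.eigenvalues i)} = ↑({i | p (hA.eigenvalues i)} : Finset ι) := by simp
  rw [spectralSubspace, hs, ← hA.eigenvectorBasis.coe_toBasis, Basis.finrank_span_image]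

theorem toEuclideanLin_eigenvectorBasis (hA : A.IsHermitian) (i : ι) :
    toEuclideanLin A (hA.eigenvectorBasis i) = hA.eigenvalues i • hA.eigenvectorBasis i := by
  ext j
  simpa using congrFun (hA.mulVec_eigenvectorBasis i) j

theorem eigenvectorBasis_repr_toEuclideanLin (hA : A.IsHermitian) (x : EuclideanSpace 𝕜 ι)
    (i : ι) :
    hA.eigenvectorBasis.repr (toEuclideanLin A x) i =
      hA.eigenvalues i * hA.eigenvectorBasis.repr x i := by
  have hsymm := isSymmetric_toEuclideanLin_iff.mpr hA
  rw [OrthonormalBasis.repr_apply_apply, OrthonormalBasis.repr_apply_apply, ← hsymm,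
    toEuclideanLin_eigenvectorBasis, RCLike.real_smul_eq_coe_smul (K := 𝕜), inner_smul_left,
    RCLike.conj_ofReal]

theorem re_inner_toEuclideanLin (hA : A.IsHermitian) (x : EuclideanSpace 𝕜 ι) :
    RCLike.re ⟪x, toEuclideanLin A x⟫_𝕜 =
      ∑ i, hA.eigenvalues i * ‖hA.eigenvectorBasis.repr x i‖ ^ 2 := by
  rw [← hA.eigenvectorBasis.repr.inner_map_map, PiLp.inner_apply, map_sum]
  refine sum_congr rfl fun i _ => ?_
  rw [eigenvectorBasis_repr_toEuclideanLin, RCLike.inner_apply, mul_assoc, RCLike.mul_conj]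
  norm_cast

theorem repr_eq_zero_of_mem_spectralSubspace {p : ℝ → Prop} {x : EuclideanSpace 𝕜 ι} {i : ι}
    (hA : A.IsHermitian) (hx : x ∈ hA.spectralSubspace p) (hi : ¬ p (hA.eigenvalues i)) :
    hA.eigenvectorBasis.repr x i = 0 := by
  rw [spectralSubspace, ← hA.eigenvectorBasis.coe_toBasis, Basis.mem_span_image] at hx
  simpa using mt (@hx i) hi

theorem re_inner_toEuclideanLin_sub_eq_sum (hA : A.IsHermitian) (x : EuclideanSpace 𝕜 ι)
    (c : ℝ) :
    RCLike.re ⟪x, toEuclideanLin A x⟫_𝕜 - c * ‖x‖ ^ 2 =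
      ∑ i, (hA.eigenvalues i - c) * ‖hA.eigenvectorBasis.repr x i‖ ^ 2 := by
  simp only [re_inner_toEuclideanLin hA, ← hA.eigenvectorBasis.repr.norm_map x,
    EuclideanSpace.norm_sq_eq, mul_sum, sub_mul, sum_sub_distrib]

theorem re_inner_toEuclideanLin_le {x : EuclideanSpace 𝕜 ι} {c : ℝ} (hA : A.IsHermitian)
    (hx : x ∈ hA.spectralSubspace (· ≤ c)) :
    RCLike.re ⟪x, toEuclideanLin A x⟫_𝕜 ≤ c * ‖x‖ ^ 2 := by
  rw [← sub_nonpos, re_inner_toEuclideanLin_sub_eq_sum hA]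
  refine sum_nonpos fun i _ => ?_
  by_cases hi : hA.eigenvalues i ≤ c
  · exact mul_nonpos_of_nonpos_of_nonneg (sub_nonpos.mpr hi) (by positivity)
  · simp [repr_eq_zero_of_mem_spectralSubspace hA hx hi]

theorem lt_re_inner_toEuclideanLin {x : EuclideanSpace 𝕜 ι} {c : ℝ} (hA : A.IsHermitian)
    (hx : x ∈ hA.spectralSubspace (c < ·)) (hx0 : x ≠ 0) :
    c * ‖x‖ ^ 2 < RCLike.re ⟪x, toEuclideanLin A x⟫_𝕜 := by
  rw [← sub_pos, re_inner_toEuclideanLin_sub_eq_sum hA]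
  have h_nonneg (i : ι) : 0 ≤ (hA.eigenvalues i - c) * ‖hA.eigenvectorBasis.repr x i‖ ^ 2 := by
    by_cases hi : c < hA.eigenvalues i
    · exact mul_nonneg (sub_nonneg.mpr hi.le) (by positivity)
    · simp [repr_eq_zero_of_mem_spectralSubspace hA hx hi]
  obtain ⟨i, hi⟩ : ∃ i, hA.eigenvectorBasis.repr x i ≠ 0 := by
    by_contra! h
    exact hx0 (hA.eigenvectorBasis.repr.map_eq_zero_iff.mp (by ext i; exact h i))
  refine sum_pos' (fun i _ => h_nonneg i) ⟨i, mem_univ i, ?_⟩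
  have hci : c < hA.eigenvalues i := by
    by_contra hci
    exact hi (repr_eq_zero_of_mem_spectralSubspace hA hx hci)
  exact mul_pos (sub_pos.mpr hci) (by positivity)

theorem disjoint_spectralSubspace_inf_ker (hA : A.IsHermitian) (hB : B.IsHermitian) (c : ℝ) :
    Disjoint (hA.spectralSubspace (· ≤ c) ⊓ LinearMap.ker (toEuclideanLin (A - B)))
      (hB.spectralSubspace (c < ·)) := by
  rw [Submodule.disjoint_def]
  rintro x ⟨hxA, hxK⟩ hxB
  by_contra hx0
  have hAB : toEuclideanLin A x = toEuclideanLin B x := by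
    simpa [sub_eq_zero] using hxK
  have hle := re_inner_toEuclideanLin_le hA hxA
  have hlt := lt_re_inner_toEuclideanLin hB hxB hx0
  rw [hAB] at hle
  exact hle.not_gt hlt

theorem card_eigenvalues_le_le_add_rank (hA : A.IsHermitian) (hB : B.IsHermitian) (c : ℝ) :
    #{i | hA.eigenvalues i ≤ c} ≤ #{i | hB.eigenvalues i ≤ c} + (A - B).rank := by
  have hdim := finrank_add_finrank_add_finrank_le_of_disjoint_inf
    (disjoint_spectralSubspace_inf_ker hA hB c)
  rw [finrank_spectralSubspace, finrank_spectralSubspace, finrank_euclideanSpace] at hdim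
  have hrank := rank_add_finrank_ker_toEuclideanLin (A - B)
  have hsplit := card_filter_add_card_filter_not (s := univ) (fun i => hB.eigenvalues i ≤ c)
  simp only [not_le, card_univ] at hsplit
  omega

end Matrix.IsHermitian

theorem abs_esdCDF_sub_le_rank_div {ι : Type*} [Fintype ι] [DecidableEq ι]
    {A B : Matrix ι ι ℝ} (hA : A.IsHermitian) (hB : B.IsHermitian) (c : ℝ) :
    |esdCDF A c - esdCDF B c| ≤ (A - B).rank / Fintype.card ι := by
  have hAB := hA.card_eigenvalues_le_le_add_rank hB c
  have hBA := hB.card_eigenvalues_le_le_add_rank hA c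
  rw [← Matrix.rank_sub_comm] at hBA
  rw [esdCDF, esdCDF, dif_pos hA, dif_pos hB, ← sub_div, abs_div, Nat.abs_cast]
  gcongr
  rw [abs_sub_le_iff, sub_le_iff_le_add', sub_le_iff_le_add']
  exact ⟨mod_cast hAB, mod_cast hBA⟩

theorem esdCDF_rank_inequality_general (n : ℕ)
    (A B : Matrix (Fin n) (Fin n) ℝ) (hA : A.IsHermitian) (hB : B.IsHermitian) :
    ∀ lam : ℝ, |esdCDF A lam - esdCDF B lam| ≤ ((A - B).rank : ℝ) / n := by
  simpa using abs_esdCDF_sub_le_rank_div hA hB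

/-- Lemma (Bai): rank inequality for empirical spectral c.d.f.s of symmetric
matrices: `‖F_A - F_B‖_∞ ≤ rank(A - B)/n`. -/
theorem esdCDF_rank_inequality (n : ℕ) (hn : 0 < n)
    (A B : Matrix (Fin n) (Fin n) ℝ) (hA : A.IsHermitian) (hB : B.IsHermitian) :
    ∀ lam : ℝ, |esdCDF A lam - esdCDF B lam| ≤ ((A - B).rank : ℝ) / n :=
  esdCDF_rank_inequality_general n A B hA hB
end

section
/- Let X and Y be real m×n matrices. Then ‖F_{X'X} − F_{Y'Y}‖_∞ ≤ rank(X − Y)/n, where X'X and Y'Y are the symmetric n×n matrices obtained by multiplying each matrix by its transpose on the left. -/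
open scoped Matrix

section Aux

open scoped Matrix RealInnerProductSpace
open Module Submodule

variable {n : ℕ}

theorem quad_eq {M : Matrix (Fin n) (Fin n) ℝ} (hM : M.IsHermitian)
    (v : EuclideanSpace ℝ (Fin n)) :
    ⟪v, Matrix.toEuclideanLin M v⟫ =
      ∑ i, hM.eigenvalues i * (hM.eigenvectorBasis.repr v i) ^ 2 := by
  set b := hM.eigenvectorBasis with hb
  have hTb : ∀ i, Matrix.toEuclideanLin M (b i) = hM.eigenvalues i • b i := by
    intro i
    apply (WithLp.equiv 2 _).injective
    simpa [Matrix.toEuclideanLin_apply] using hM.mulVec_eigenvectorBasis i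
  have hTv : Matrix.toEuclideanLin M v = ∑ i, (hM.eigenvalues i * b.repr v i) • b i := by
    conv_lhs => rw [← b.sum_repr v]
    rw [map_sum]
    simp [hTb, smul_smul, mul_comm]
  rw [hTv, inner_sum]
  refine Finset.sum_congr rfl fun i _ => ?_
  rw [real_inner_smul_right, real_inner_comm, ← b.repr_apply_apply]
  ring

theorem normsq_eq {M : Matrix (Fin n) (Fin n) ℝ} (hM : M.IsHermitian)
    (v : EuclideanSpace ℝ (Fin n)) :
    ⟪v, v⟫ = ∑ i, (hM.eigenvectorBasis.repr v i) ^ 2 := by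
  set b := hM.eigenvectorBasis with hb
  conv_lhs => rw [← b.sum_repr v]
  rw [inner_sum]
  refine Finset.sum_congr rfl fun i _ => ?_
  rw [real_inner_smul_right, real_inner_comm, ← b.repr_apply_apply, b.sum_repr v]
  ring

open scoped Matrix RealInnerProductSpace
open Module Submodule

variable {m n : ℕ}

noncomputable def eigSpan {M : Matrix (Fin n) (Fin n) ℝ} (hM : M.IsHermitian)
    (s : Finset (Fin n)) : Submodule ℝ (EuclideanSpace ℝ (Fin n)) :=
  Submodule.span ℝ (Set.range fun i : s => hM.eigenvectorBasis i)

theorem eigSpan_finrank {M : Matrix (Fin n) (Fin n) ℝ} (hM : M.IsHermitian)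
    (s : Finset (Fin n)) : finrank ℝ (eigSpan hM s) = s.card := by
  rw [eigSpan]
  rw [finrank_span_eq_card (b := fun i : s => hM.eigenvectorBasis i)
    ((hM.eigenvectorBasis.orthonormal.comp _ Subtype.val_injective).linearIndependent),
    Fintype.card_coe]

theorem eigSpan_repr_eq_zero {M : Matrix (Fin n) (Fin n) ℝ} (hM : M.IsHermitian)
    {s : Finset (Fin n)} {v : EuclideanSpace ℝ (Fin n)} (hv : v ∈ eigSpan hM s)
    {i : Fin n} (hi : i ∉ s) : hM.eigenvectorBasis.repr v i = 0 := by
  induction hv using Submodule.span_induction with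
  | mem x hx =>
      obtain ⟨j, rfl⟩ := hx
      rw [hM.eigenvectorBasis.repr_self, EuclideanSpace.single_apply, if_neg]
      rintro rfl
      exact hi j.2
  | zero => simp
  | add x y _ _ hx hy => rw [map_add]; simp [hx, hy]
  | smul c x _ hx => rw [map_smul]; simp [hx]

theorem ker_finrank (Z : Matrix (Fin m) (Fin n) ℝ) :
    finrank ℝ (LinearMap.ker (Matrix.toEuclideanLin Z)) + Z.rank = n := by
  rw [Z.rank_eq_finrank_range_toLin (PiLp.basisFun 2 ℝ (Fin m)) (PiLp.basisFun 2 ℝ (Fin n)),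
    ← Matrix.toEuclideanLin_eq_toLin, add_comm]
  have := LinearMap.finrank_range_add_finrank_ker (Matrix.toEuclideanLin Z)
  rw [this]
  simp

open scoped Matrix RealInnerProductSpace
open Module Submodule
open scoped Classical

variable {m n : ℕ}

theorem gram_quad (X : Matrix (Fin m) (Fin n) ℝ) (v : EuclideanSpace ℝ (Fin n)) :
    ⟪v, Matrix.toEuclideanLin (Xᵀ * X) v⟫ =
      ⟪Matrix.toEuclideanLin X v, Matrix.toEuclideanLin X v⟫ := by
  have ht : Xᵀ = Xᴴ := Matrix.ext fun i j => by simp [Matrix.conjTranspose_apply]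
  have hc : Matrix.toEuclideanLin (Xᴴ * X) v =
      Matrix.toEuclideanLin Xᴴ (Matrix.toEuclideanLin X v) := by
    apply (WithLp.equiv 2 _).injective
    simp [Matrix.toEuclideanLin_apply, Matrix.mulVec_mulVec]
  rw [ht, hc, Matrix.toEuclideanLin_conjTranspose_eq_adjoint,
    LinearMap.adjoint_inner_right]

theorem count_key (X Y : Matrix (Fin m) (Fin n) ℝ) (lam : ℝ)
    (hA : (Xᵀ * X).IsHermitian) (hB : (Yᵀ * Y).IsHermitian) :
    (Finset.univ.filter fun i => hA.eigenvalues i ≤ lam).card ≤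
      (Finset.univ.filter fun i => hB.eigenvalues i ≤ lam).card + (X - Y).rank := by
  set sA := Finset.univ.filter fun i => hA.eigenvalues i ≤ lam with hsA
  set sB := Finset.univ.filter fun i => hB.eigenvalues i ≤ lam with hsB
  set sB' := Finset.univ.filter fun i => ¬ hB.eigenvalues i ≤ lam with hsB'
  set VA := eigSpan hA sA with hVA
  set VB' := eigSpan hB sB' with hVB'
  set W := LinearMap.ker (Matrix.toEuclideanLin (X - Y)) with hW
  have hdis : Disjoint (VA ⊓ W) VB' := by
    rw [Submodule.disjoint_def]
    intro v hvS hvB'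
    by_contra hv0
    have hvA : v ∈ VA := hvS.1
    have hvW : v ∈ W := hvS.2
    have h1 : ⟪v, Matrix.toEuclideanLin (Xᵀ * X) v⟫ ≤ lam * ⟪v, v⟫ := by
      rw [quad_eq hA, normsq_eq hA, Finset.mul_sum]
      refine Finset.sum_le_sum fun i _ => ?_
      by_cases hi : i ∈ sA
      · have hle : hA.eigenvalues i ≤ lam := (Finset.mem_filter.mp hi).2
        nlinarith [sq_nonneg (hA.eigenvectorBasis.repr v i)]
      · rw [eigSpan_repr_eq_zero hA hvA hi]; simp
    have h2 : Matrix.toEuclideanLin X v = Matrix.toEuclideanLin Y v := by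
      have := LinearMap.mem_ker.mp hvW
      rw [map_sub] at this
      have := sub_eq_zero.mp this
      exact this
    have hQeq : ⟪v, Matrix.toEuclideanLin (Xᵀ * X) v⟫
        = ⟪v, Matrix.toEuclideanLin (Yᵀ * Y) v⟫ := by
      rw [gram_quad X v, gram_quad Y v, h2]
    have h3 : lam * ⟪v, v⟫ < ⟪v, Matrix.toEuclideanLin (Yᵀ * Y) v⟫ := by
      obtain ⟨j, hj⟩ : ∃ j, hB.eigenvectorBasis.repr v j ≠ 0 := by
        by_contra h
        push_neg at h
        apply hv0
        have hz : hB.eigenvectorBasis.repr v = 0 := by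
          ext i; exact h i
        simpa using (map_eq_zero_iff _ hB.eigenvectorBasis.repr.injective).mp hz
      have hjB : j ∈ sB' := by
        by_contra hjB
        exact hj (eigSpan_repr_eq_zero hB hvB' hjB)
      rw [quad_eq hB, normsq_eq hB, Finset.mul_sum]
      refine Finset.sum_lt_sum (fun i _ => ?_) ⟨j, Finset.mem_univ j, ?_⟩
      · by_cases hi : i ∈ sB'
        · have : lam < hB.eigenvalues i := by
            have := (Finset.mem_filter.mp hi).2; linarith [not_le.mp this]
          nlinarith [sq_nonneg (hB.eigenvectorBasis.repr v i)]
        · rw [eigSpan_repr_eq_zero hB hvB' hi]; simp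
      · have hlt : lam < hB.eigenvalues j := not_le.mp (Finset.mem_filter.mp hjB).2
        have : (0:ℝ) < (hB.eigenvectorBasis.repr v j) ^ 2 := by positivity
        nlinarith
    rw [hQeq] at h1
    linarith
  have e1 : finrank ℝ ↥(VA ⊔ W) + finrank ℝ ↥(VA ⊓ W)
      = finrank ℝ ↥VA + finrank ℝ ↥W :=
    Submodule.finrank_sup_add_finrank_inf_eq _ _
  have e2 : finrank ℝ ↥(VA ⊔ W) ≤ n := by
    refine le_trans (Submodule.finrank_le _) ?_
    simp
  have e3 : finrank ℝ ↥(VA ⊓ W) + finrank ℝ ↥VB' ≤ n := by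
    refine le_trans (Submodule.finrank_add_finrank_le_of_disjoint hdis) ?_
    simp
  have e4 : finrank ℝ ↥W + (X - Y).rank = n := ker_finrank _
  have e5 : finrank ℝ ↥VA = sA.card := eigSpan_finrank hA sA
  have e6 : finrank ℝ ↥VB' = sB'.card := eigSpan_finrank hB sB'
  have e7 : sB.card + sB'.card = n := by
    rw [hsB, hsB', Finset.card_filter_add_card_filter_not]
    simp
  omega

theorem rank_neg' (M : Matrix (Fin m) (Fin n) ℝ) : (-M).rank = M.rank := by
  have h : (-M).mulVecLin = -(M.mulVecLin) := by
    ext v i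
    simp [Matrix.neg_mulVec]
  unfold Matrix.rank
  rw [h, LinearMap.range_neg]

end Aux

/-- Lemma (Bai): rank inequality for empirical spectral c.d.f.s of Gram matrices:
`‖F_{XᵀX} - F_{YᵀY}‖_∞ ≤ rank(X - Y)/n`. -/
theorem esdCDF_gram_rank_inequality (m n : ℕ) (hn : 0 < n)
    (X Y : Matrix (Fin m) (Fin n) ℝ) :
    ∀ lam : ℝ, |esdCDF (Xᵀ * X) lam - esdCDF (Yᵀ * Y) lam| ≤ ((X - Y).rank : ℝ) / n := by

  intro lam
  have hA : (Xᵀ * X).IsHermitian := by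
    have ht : Xᵀ = Xᴴ := Matrix.ext fun i j => by simp [Matrix.conjTranspose_apply]
    rw [ht]; exact Matrix.isHermitian_conjTranspose_mul_self X
  have hB : (Yᵀ * Y).IsHermitian := by
    have ht : Yᵀ = Yᴴ := Matrix.ext fun i j => by simp [Matrix.conjTranspose_apply]
    rw [ht]; exact Matrix.isHermitian_conjTranspose_mul_self Y
  rw [esdCDF, esdCDF, dif_pos hA, dif_pos hB]
  set p := (Finset.univ.filter fun i => hA.eigenvalues i ≤ lam).card with hp
  set q := (Finset.univ.filter fun i => hB.eigenvalues i ≤ lam).card with hq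
  have h1 : p ≤ q + (X - Y).rank := count_key X Y lam hA hB
  have h2 : q ≤ p + (X - Y).rank := by
    have := count_key Y X lam hB hA
    have hr : (Y - X).rank = (X - Y).rank := by
      rw [← neg_sub X Y, rank_neg']
    omega
  rw [Fintype.card_fin, div_sub_div_same, abs_div,
    abs_of_nonneg (by positivity : (0:ℝ) ≤ (n : ℝ))]
  have h1' : (p:ℝ) ≤ (q:ℝ) + ((X - Y).rank : ℝ) := by exact_mod_cast h1
  have h2' : (q:ℝ) ≤ (p:ℝ) + ((X - Y).rank : ℝ) := by exact_mod_cast h2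
  gcongr
  rw [abs_sub_le_iff]
  constructor <;> linarith
end

section
/- Let A and B be real symmetric n×n matrices, let a and b with −∞ ≤ a < b ≤ ∞ be such that all eigenvalues of A and of B lie in the open interval (a, b), and let f : (a,b) → ℝ be of bounded variation on (a,b) with total variation V_f(a,b). Then |F_A(f) − F_B(f)| ≤ ‖F_A − F_B‖_∞ · V_f(a,b). In particular, if ‖F_A − F_B‖_∞ ≤ r/n for an integer r, then |F_A(f) − F_B(f)| ≤ r·V_f(a,b)/n. -/
open scoped Matrix ENNReal

/-!
Merge the two spectra into one signed measure on the finite set of eigenvalues, with mass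
`c_t = #{i | λ_i(A) = t} - #{i | λ_i(B) = t}` at `t`. Its total mass is zero and its cumulative
distribution function is `n (F_A - F_B)`. Summation by parts along the atoms in increasing order
turns `∑ c_t f(t)` into a sum of increments of `f` between consecutive atoms, each weighted by
the cumulative distribution function, so it is at most `n ‖F_A - F_B‖_∞ V_f(a, b)`.
-/

open Finset

theorem sum_card_fiber_smul {ι α M : Type*} [Fintype ι] [DecidableEq α] [AddCommGroup M]
    [Module ℝ M] {x : ι → α} {T : Finset α} (hx : ∀ i, x i ∈ T) (g : α → M) :
    ∑ t ∈ T, (#{i | x i = t} : ℝ) • g t = ∑ i, g (x i) := by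
  rw [← sum_fiberwise_of_maps_to' (fun i _ => hx i) g]
  simp only [sum_const, Nat.cast_smul_eq_nsmul]

section Variation

variable {α E : Type*} [LinearOrder α] [NormedAddCommGroup E] [NormedSpace ℝ E]

/- The correction `(∑ c) • f b` makes the statement inductive: removing the largest atom `m`
leaves the same expression with `b := m`, plus the jump `(∑ c) • (f m - f b)`. -/
theorem enorm_sum_smul_sub_le_eVariationOn_Iic (f : α → E) {s : Set α} (c : α → ℝ) {C : ℝ}
    (T : Finset α) (hTs : ↑T ⊆ s) (hC : ∀ t ∈ T, |∑ u ∈ T with u ≤ t, c u| ≤ C)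
    {b : α} (hb : b ∈ s) (hTb : ∀ t ∈ T, t ≤ b) :
    ‖∑ t ∈ T, c t • f t - (∑ t ∈ T, c t) • f b‖ₑ
      ≤ ENNReal.ofReal C * eVariationOn f (s ∩ Set.Iic b) := by
  classical
  induction T using induction_on_max generalizing b with
  | empty => simp
  | insert m T hTm ih =>
    have hm : m ∈ s := hTs (mem_insert_self m T)
    have hCm : |∑ t ∈ insert m T, c t| ≤ C := by
      have hle : ∀ t ∈ insert m T, t ≤ m := by
        simpa using fun t ht => (hTm t ht).le
      simpa [filter_true_of_mem hle] using hC m (mem_insert_self m T)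
    have ihm := ih (fun t ht => hTs (mem_insert_of_mem ht))
      (fun t ht => by
        simpa [filter_insert, (hTm t ht).not_ge] using
          hC t (mem_insert_of_mem ht))
      hm (fun t ht => (hTm t ht).le)
    have hsplit : ∑ t ∈ insert m T, c t • f t - (∑ t ∈ insert m T, c t) • f b
        = (∑ t ∈ T, c t • f t - (∑ t ∈ T, c t) • f m)
          + (∑ t ∈ insert m T, c t) • (f m - f b) := by
      rw [sum_insert (fun h => (hTm m h).false), sum_insert
        (fun h => (hTm m h).false)]
      simp only [smul_sub, add_smul]
      abel
    have hjump : ‖(∑ t ∈ insert m T, c t) • (f m - f b)‖ₑ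
        ≤ ENNReal.ofReal C * eVariationOn f (s ∩ Set.Icc m b) := by
      rw [enorm_smul, Real.enorm_eq_ofReal_abs, ← edist_eq_enorm_sub]
      exact mul_le_mul' (ENNReal.ofReal_le_ofReal hCm)
        (eVariationOn.edist_le f ⟨hm, le_rfl, hTb m (mem_insert_self m T)⟩
          ⟨hb, hTb m (mem_insert_self m T), le_rfl⟩)
    calc _ ≤ ENNReal.ofReal C * eVariationOn f (s ∩ Set.Iic m)
            + ENNReal.ofReal C * eVariationOn f (s ∩ Set.Icc m b) := by
          rw [hsplit]; exact (enorm_add_le _ _).trans (add_le_add ihm hjump)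
      _ ≤ ENNReal.ofReal C * eVariationOn f (s ∩ Set.Iic b) := by
          rw [← mul_add]
          gcongr
          refine (eVariationOn.add_le_union f fun x hx y hy => hx.2.trans hy.2.1).trans
            (eVariationOn.mono f ?_)
          rintro x (hx | hx)
          · exact ⟨hx.1, hx.2.trans (hTb m (mem_insert_self m T))⟩
          · exact ⟨hx.1, hx.2.2⟩

theorem enorm_sum_smul_le_eVariationOn (f : α → E) {s : Set α} (c : α → ℝ) {C : ℝ}
    (T : Finset α) (hTs : ↑T ⊆ s) (hT : ∑ t ∈ T, c t = 0)
    (hC : ∀ t ∈ T, |∑ u ∈ T with u ≤ t, c u| ≤ C) :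
    ‖∑ t ∈ T, c t • f t‖ₑ ≤ ENNReal.ofReal C * eVariationOn f s := by
  rcases T.eq_empty_or_nonempty with rfl | hne
  · simp
  · have key := enorm_sum_smul_sub_le_eVariationOn_Iic f c T hTs hC
      (hTs (T.max'_mem hne)) (fun t ht => T.le_max' t ht)
    rw [hT, zero_smul, sub_zero] at key
    exact key.trans (by gcongr; exact eVariationOn.mono f Set.inter_subset_left)

theorem enorm_sum_sub_sum_le_eVariationOn {ι : Type*} [Fintype ι] (f : α → E) {s : Set α}
    {x y : ι → α} (hx : ∀ i, x i ∈ s) (hy : ∀ i, y i ∈ s) {C : ℝ}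
    (hC : ∀ t, |(#{i | x i ≤ t} : ℝ) - #{i | y i ≤ t}| ≤ C) :
    ‖∑ i, f (x i) - ∑ i, f (y i)‖ₑ ≤ ENNReal.ofReal C * eVariationOn f s := by
  classical
  set T := univ.image x ∪ univ.image y
  have hxT : ∀ i, x i ∈ T := fun i => mem_union_left _ (mem_image_of_mem x (mem_univ i))
  have hyT : ∀ i, y i ∈ T := fun i => mem_union_right _ (mem_image_of_mem y (mem_univ i))
  set c : α → ℝ := fun t => #{i | x i = t} - #{i | y i = t}
  have hsum (g : α → ℝ) : ∑ t ∈ T, c t * g t = ∑ i, g (x i) - ∑ i, g (y i) := by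
    simp only [← smul_eq_mul, c, sub_smul, sum_sub_distrib, sum_card_fiber_smul hxT,
      sum_card_fiber_smul hyT]
  have hcum (t : α) : ∑ u ∈ T with u ≤ t, c u = #{i | x i ≤ t} - #{i | y i ≤ t} := by
    have := hsum fun u => if u ≤ t then (1 : ℝ) else 0
    simp only [mul_ite, mul_one, mul_zero, sum_boole] at this
    rw [sum_filter, this]
  have hsum_f : ∑ t ∈ T, c t • f t = ∑ i, f (x i) - ∑ i, f (y i) := by
    simp only [c, sub_smul, sum_sub_distrib, sum_card_fiber_smul hxT,
      sum_card_fiber_smul hyT]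
  rw [← hsum_f]
  refine enorm_sum_smul_le_eVariationOn f c T ?_ ?_ fun t _ => (hcum t).symm ▸ hC t
  · simp only [T, coe_union, coe_image, coe_univ, Set.image_univ]
    exact Set.union_subset (Set.range_subset_iff.2 hx) (Set.range_subset_iff.2 hy)
  · simpa using hsum fun _ => (1 : ℝ)

end Variation

section Spectral

variable {ι : Type*} [Fintype ι] [DecidableEq ι] {A B : Matrix ι ι ℝ}

theorem specInt_of_isHermitian (hA : A.IsHermitian) (f : ℝ → ℝ) :
    specInt A f = (∑ i, f (hA.eigenvalues i)) / Fintype.card ι :=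
  dif_pos hA

theorem esdCDF_of_isHermitian (hA : A.IsHermitian) (lam : ℝ) :
    esdCDF A lam = (#{i | hA.eigenvalues i ≤ lam} : ℝ) / Fintype.card ι := by
  rw [esdCDF, dif_pos hA]

theorem esdCDF_nonneg (hA : A.IsHermitian) (lam : ℝ) : 0 ≤ esdCDF A lam := by
  rw [esdCDF_of_isHermitian hA]
  positivity

theorem esdCDF_le_one (hA : A.IsHermitian) (lam : ℝ) : esdCDF A lam ≤ 1 := by
  rw [esdCDF_of_isHermitian hA]
  exact div_le_one_of_le₀ (mod_cast card_filter_le _ _) (Nat.cast_nonneg _)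

theorem card_eigenvalues_le_eq_mul_esdCDF (hA : A.IsHermitian) (lam : ℝ) :
    (#{i | hA.eigenvalues i ≤ lam} : ℝ) = Fintype.card ι * esdCDF A lam := by
  cases isEmpty_or_nonempty ι
  · simp
  · rw [esdCDF_of_isHermitian hA, mul_div_cancel₀ _ (by positivity)]

theorem abs_esdCDF_sub_le_one (hA : A.IsHermitian) (hB : B.IsHermitian) (lam : ℝ) :
    |esdCDF A lam - esdCDF B lam| ≤ 1 :=
  abs_sub_le_of_nonneg_of_le (esdCDF_nonneg hA lam) (esdCDF_le_one hA lam)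
    (esdCDF_nonneg hB lam) (esdCDF_le_one hB lam)

theorem abs_specInt_sub_le_mul (hA : A.IsHermitian) (hB : B.IsHermitian) {s : Set ℝ}
    (hAs : ∀ i, hA.eigenvalues i ∈ s) (hBs : ∀ i, hB.eigenvalues i ∈ s) {f : ℝ → ℝ} {V : ℝ}
    (hV0 : 0 ≤ V) (hV : eVariationOn f s ≤ ENNReal.ofReal V) {C : ℝ}
    (hC : ∀ lam, |esdCDF A lam - esdCDF B lam| ≤ C) :
    |specInt A f - specInt B f| ≤ C * V := by
  have hC0 : 0 ≤ C := (abs_nonneg _).trans (hC 0)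
  have hN : (0 : ℝ) ≤ Fintype.card ι := Nat.cast_nonneg _
  have hcount (t : ℝ) : |(#{i | hA.eigenvalues i ≤ t} : ℝ) - #{i | hB.eigenvalues i ≤ t}|
      ≤ C * Fintype.card ι := by
    rw [card_eigenvalues_le_eq_mul_esdCDF hA, card_eigenvalues_le_eq_mul_esdCDF hB, ← mul_sub,
      abs_mul, abs_of_nonneg hN, mul_comm]
    exact mul_le_mul_of_nonneg_right (hC t) hN
  have hsums : |∑ i, f (hA.eigenvalues i) - ∑ i, f (hB.eigenvalues i)|
      ≤ C * Fintype.card ι * V := by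
    have := (enorm_sum_sub_sum_le_eVariationOn f hAs hBs hcount).trans
      (mul_le_mul_right hV _)
    rwa [Real.enorm_eq_ofReal_abs, ← ENNReal.ofReal_mul (by positivity),
      ENNReal.ofReal_le_ofReal_iff (by positivity)] at this
  rw [specInt_of_isHermitian hA, specInt_of_isHermitian hB, ← sub_div, abs_div, abs_of_nonneg hN]
  exact div_le_of_le_mul₀ hN (by positivity) (by linarith)

end Spectral

theorem specInt_diff_le_sup_esd_mul_variation_general (n : ℕ)
    (A B : Matrix (Fin n) (Fin n) ℝ) (hA : A.IsHermitian) (hB : B.IsHermitian)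
    (a b : EReal)
    (hAspec : ∀ i, a < (hA.eigenvalues i : EReal) ∧ (hA.eigenvalues i : EReal) < b)
    (hBspec : ∀ i, a < (hB.eigenvalues i : EReal) ∧ (hB.eigenvalues i : EReal) < b)
    (f : ℝ → ℝ) (Vf : ℝ) (hVf0 : 0 ≤ Vf)
    (hVf : eVariationOn f {x : ℝ | a < (x : EReal) ∧ (x : EReal) < b} = ENNReal.ofReal Vf) :
    |specInt A f - specInt B f|
        ≤ (⨆ lam : ℝ, |esdCDF A lam - esdCDF B lam|) * Vf ∧
      ∀ r : ℕ, (∀ lam : ℝ, |esdCDF A lam - esdCDF B lam| ≤ (r : ℝ) / n) →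
        |specInt A f - specInt B f| ≤ (r : ℝ) * Vf / n := by
  have key {C : ℝ} (hC : ∀ lam, |esdCDF A lam - esdCDF B lam| ≤ C) :=
    abs_specInt_sub_le_mul hA hB hAspec hBspec hVf0 hVf.le hC
  have hbdd : BddAbove (Set.range fun lam => |esdCDF A lam - esdCDF B lam|) :=
    ⟨1, Set.forall_mem_range.2 (abs_esdCDF_sub_le_one hA hB)⟩
  exact ⟨key (le_ciSup hbdd), fun r hr => (key hr).trans_eq (div_mul_eq_mul_div _ _ _)⟩

/-- If all eigenvalues of the real symmetric matrices `A` and `B` lie in the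
(possibly unbounded) open interval `(a, b)` and `f` is of bounded variation on
`(a, b)` with total variation `Vf`, then
`|F_A(f) - F_B(f)| ≤ ‖F_A - F_B‖_∞ · Vf`; in particular, if
`‖F_A - F_B‖_∞ ≤ r/n` then `|F_A(f) - F_B(f)| ≤ r·Vf/n`. -/
theorem specInt_diff_le_sup_esd_mul_variation (n : ℕ) (hn : 0 < n)
    (A B : Matrix (Fin n) (Fin n) ℝ) (hA : A.IsHermitian) (hB : B.IsHermitian)
    (a b : EReal) (hab : a < b)
    (hAspec : ∀ i, a < (hA.eigenvalues i : EReal) ∧ (hA.eigenvalues i : EReal) < b)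
    (hBspec : ∀ i, a < (hB.eigenvalues i : EReal) ∧ (hB.eigenvalues i : EReal) < b)
    (f : ℝ → ℝ) (Vf : ℝ) (hVf0 : 0 ≤ Vf)
    (hVf : eVariationOn f {x : ℝ | a < (x : EReal) ∧ (x : EReal) < b} = ENNReal.ofReal Vf) :
    |specInt A f - specInt B f|
        ≤ (⨆ lam : ℝ, |esdCDF A lam - esdCDF B lam|) * Vf ∧
      ∀ r : ℕ, (∀ lam : ℝ, |esdCDF A lam - esdCDF B lam| ≤ (r : ℝ) / n) →
        |specInt A f - specInt B f| ≤ (r : ℝ) * Vf / n :=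
  specInt_diff_le_sup_esd_mul_variation_general n A B hA hB a b hAspec hBspec f Vf hVf0 hVf
end
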